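/- cov(N) ≤ 𝔟_⋔ and 𝔟_⋔ ≤ non(M): on Cantor space, the covering number of the null ideal is at most 𝔟_⋔, which in turn is at most the uniformity of the meager ideal. -/

import Mathlib

open Cardinal Set Filter MeasureTheory

/-- The `n`-th block of the fixed interval partition of `ℕ` into consecutive finite
intervals with `|I_n| = 2^(n+1)`: `I n = [2^(n+1) - 2, 2^(n+2) - 2)`. -/
def Iblock (n : ℕ) : Finset ℕ := Finset.Ico (2 ^ (n + 1) - 2) (2 ^ (n + 2) - 2)

/-- `f ⋔ g`: `f ↾ I_k ≠ g ↾ I_k` for all but finitely many `k`. -/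
def Pitch (f g : ℕ → Bool) : Prop :=
  ∀ᶠ k in Filter.atTop, ∃ i ∈ Iblock k, f i ≠ g i

/-- `μ` is the uniform product probability measure on Cantor space `2^ω`
(each coordinate uniform on `{0,1}`), characterized by its values on cylinders. -/
def IsUniformProductMeasure (μ : Measure (ℕ → Bool)) : Prop :=
  IsProbabilityMeasure μ ∧
  ∀ s : Finset ℕ, ∀ g : ℕ → Bool,
    μ { f : ℕ → Bool | ∀ i ∈ s, f i = g i } = (1 / 2 : ENNReal) ^ s.card

/-- `𝔟_⋔`: the least cardinality of a family `F ⊆ 2^ω` such that for every `g ∈ 2^ω`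
some `f ∈ F` satisfies `¬(f ⋔ g)`. -/
noncomputable def bPitch : Cardinal :=
  sInf { c | ∃ F : Set (ℕ → Bool), (∀ g : ℕ → Bool, ∃ f ∈ F, ¬ Pitch f g) ∧ #F = c }

/-- `cov(N)` on Cantor space: the least cardinality of a family of `μ`-null subsets of
`2^ω` whose union covers `2^ω`. -/
noncomputable def covNullCantor (μ : Measure (ℕ → Bool)) : Cardinal :=
  sInf { c | ∃ F : Set (Set (ℕ → Bool)), (∀ s ∈ F, μ s = 0) ∧ ⋃₀ F = Set.univ ∧ #F = c }

/-- `non(M)` on Cantor space: the least cardinality of a non-meager subset of `2^ω`. -/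
noncomputable def nonMeagerCantor : Cardinal :=
  sInf { c | ∃ S : Set (ℕ → Bool), ¬ IsMeagre S ∧ #S = c }

open Topology

/-!
For fixed `f`, the functions `g` with `¬ f ⋔ g` are those agreeing with `f` on infinitely many
blocks `I_k`. Since `|I_k| ≥ k`, Borel–Cantelli makes this set null; since the blocks escape to
infinity, it is also a dense `G_δ`, hence comeagre. So a witness family `F` for `𝔟_⋔` yields
`|F|` null sets covering `2^ω`, and a non-meagre set `S` is a witness family for `𝔟_⋔`.
-/

lemma card_Iblock (k : ℕ) : (Iblock k).card = 2 ^ (k + 1) := by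
  have : 2 ≤ 2 ^ (k + 1) := le_self_pow₀ one_le_two k.succ_ne_zero
  simp only [Iblock, Nat.card_Ico, pow_succ 2 (k + 1)]
  omega

lemma le_card_Iblock (k : ℕ) : k ≤ (Iblock k).card := by
  rw [card_Iblock]
  exact (Nat.lt_two_pow_self (n := k + 1)).le.trans' k.le_succ

lemma le_of_mem_Iblock {k i : ℕ} (hi : i ∈ Iblock k) : k ≤ i := by
  have := Nat.lt_two_pow_self (n := k + 1)
  simp only [Iblock, Finset.mem_Ico] at hi
  omega

lemma pitch_comm {f g : ℕ → Bool} : Pitch f g ↔ Pitch g f := by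
  simp only [Pitch, ne_comm]

lemma not_pitch_iff {f g : ℕ → Bool} :
    ¬ Pitch f g ↔ ∃ᶠ k in atTop, ∀ i ∈ Iblock k, f i = g i := by
  simp only [Pitch, not_eventually, not_exists, not_and, ne_eq, not_not]

lemma not_pitch_self (g : ℕ → Bool) : ¬ Pitch g g :=
  not_pitch_iff.2 (Frequently.of_forall fun _ _ _ => rfl)

theorem measure_setOf_frequently_agree_eq_zero {μ : Measure (ℕ → Bool)}
    (hμ : ∀ (s : Finset ℕ) (g : ℕ → Bool), μ {f | ∀ i ∈ s, f i = g i} = (1 / 2) ^ s.card)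
    {I : ℕ → Finset ℕ} (hI : ∀ k, k ≤ (I k).card) (g : ℕ → Bool) :
    μ {f | ∃ᶠ k in atTop, ∀ i ∈ I k, f i = g i} = 0 := by
  refine measure_setOfPred_frequently_eq_zero <|
    ne_top_of_le_ne_top (b := ∑' k : ℕ, (1 / 2) ^ k) ?_ (ENNReal.tsum_le_tsum fun k => ?_)
  · simp [one_div]
  · rw [hμ]
    exact pow_le_pow_of_le_one zero_le (by norm_num) (hI k)

lemma tendsto_piecewise_atTop {β : Type*} [TopologicalSpace β] {I : ℕ → Finset ℕ}
    (hI : ∀ k, ∀ i ∈ I k, k ≤ i) (g f : ℕ → β) :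
    Tendsto (fun k => (I k).piecewise g f) atTop (𝓝 f) :=
  tendsto_pi_nhds.2 fun i => tendsto_const_nhds.congr' <|
    (eventually_gt_atTop i).mono fun k hk =>
      (Finset.piecewise_eq_of_notMem _ _ _ fun hi => (hI k i hi).not_gt hk).symm

theorem setOf_frequently_agree_mem_residual {β : Type*} [TopologicalSpace β]
    [DiscreteTopology β] {I : ℕ → Finset ℕ} (hI : ∀ k, ∀ i ∈ I k, k ≤ i) (g : ℕ → β) :
    {f | ∃ᶠ k in atTop, ∀ i ∈ I k, f i = g i} ∈ residual (ℕ → β) := by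
  have hGδ : {f : ℕ → β | ∃ᶠ k in atTop, ∀ i ∈ I k, f i = g i} =
      ⋂ n, ⋃ k ≥ n, (I k : Set ℕ).pi fun i => {g i} := by
    ext f
    simp [frequently_atTop]
  rw [hGδ, countable_iInter_mem]
  intro n
  refine residual_of_dense_open
    (isOpen_biUnion fun k _ => isOpen_set_pi (I k).finite_toSet fun _ _ => isOpen_discrete _)
    fun f => mem_closure_of_tendsto (tendsto_piecewise_atTop hI g f) ?_
  filter_upwards [eventually_ge_atTop n] with k hk
  exact mem_biUnion hk fun i hi => Finset.piecewise_eq_of_mem _ _ _ hi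

lemma measure_setOf_not_pitch_eq_zero {μ : Measure (ℕ → Bool)} (hμ : IsUniformProductMeasure μ)
    (f : ℕ → Bool) : μ {g | ¬ Pitch f g} = 0 := by
  simpa only [pitch_comm (f := f), not_pitch_iff] using
    measure_setOf_frequently_agree_eq_zero hμ.2 le_card_Iblock f

lemma isMeagre_setOf_pitch (g : ℕ → Bool) : IsMeagre {f | Pitch f g} := by
  simpa only [IsMeagre, compl_ofPred, not_pitch_iff] using
    setOf_frequently_agree_mem_residual (fun k _ => le_of_mem_Iblock) g

lemma covNullCantor_le_mk {μ : Measure (ℕ → Bool)} {ι : Type} (A : ι → Set (ℕ → Bool))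
    (hA : ∀ i, μ (A i) = 0) (hcover : ∀ x, ∃ i, x ∈ A i) : covNullCantor μ ≤ #ι :=
  calc covNullCantor μ ≤ #(range A) :=
        csInf_le' ⟨range A, forall_mem_range.2 hA,
          (sUnion_range A).trans (iUnion_eq_univ_iff.2 hcover), rfl⟩
    _ ≤ #ι := mk_range_le

lemma covNullCantor_le_bPitch {μ : Measure (ℕ → Bool)} (hμ : IsUniformProductMeasure μ) :
    covNullCantor μ ≤ bPitch := by
  refine le_csInf ⟨_, univ, fun g => ⟨g, mem_univ g, not_pitch_self g⟩, rfl⟩ ?_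
  rintro _ ⟨F, hF, rfl⟩
  refine covNullCantor_le_mk (fun f : F => {g | ¬ Pitch f g})
    (fun f => measure_setOf_not_pitch_eq_zero hμ f) fun g => ?_
  obtain ⟨f, hf, hfg⟩ := hF g
  exact ⟨⟨f, hf⟩, hfg⟩

lemma bPitch_le_nonMeagerCantor : bPitch ≤ nonMeagerCantor := by
  refine le_csInf ⟨_, univ, not_isMeagre_of_isOpen isOpen_univ univ_nonempty, rfl⟩ ?_
  rintro _ ⟨S, hS, rfl⟩
  refine csInf_le' ⟨S, fun g => ?_, rfl⟩
  by_contra! hSg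
  exact hS ((isMeagre_setOf_pitch g).mono hSg)

/-- `cov(N) ≤ 𝔟_⋔ ≤ non(M)` on Cantor space. -/
theorem covNull_le_bPitch_le_nonMeager (μ : Measure (ℕ → Bool))
    (hμ : IsUniformProductMeasure μ) :
    covNullCantor μ ≤ bPitch ∧ bPitch ≤ nonMeagerCantor :=
  ⟨covNullCantor_le_bPitch hμ, bPitch_le_nonMeagerCantor⟩
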